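/- arXiv:2405.08634 — 2 statements merged into one kernel-verified Lean document; each statement's English description precedes it below -/
import Mathlib

section
/- Let 0 < τ₀ ≤ τ₁ with τ₁ = (n₀+1)τ₀ − γ, n₀ ∈ ℕ, γ ∈ [0,τ₀), a, b ∈ ℝ, and let N : [0,τ₀] → ℝ and M : [0,τ₁] → ℝ be piecewise continuously differentiable (extended by 0 outside their domains). Let s ∈ ℂ and let h = (g₀,…,g_{n₀},f) ∈ D(A_T) (ℂ-valued) satisfy A_T h = s·h and B_T h = 0 (i.e., g₀(0) = 0). Then f(ν) = (e^{sν} − ∫₀^ν N(η)e^{s(ν−η)}dη)·f(0) for all ν ∈ [0,τ₀], and F₀(s)·f(0) = 0 and F₁(s)·f(0) = 0, where F₀(s) = 1 − a·exp(−τ₀s) − ∫₀^{τ₀} N(ν)exp(−νs)dν and F₁(s) = b·exp(−τ₁s) + ∫₀^{τ₁} M(ν)exp(−νs)dν. -/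
/-! Each component `u` of an eigenvector solves `u' = s u - f(0) φ` on `[0, τ₀]` for a known
forcing `φ`, so `(e^{-sx} u(x))' = -f(0) φ(x) e^{-sx}`. Integrating this for `u = f`, `φ = N` gives
`f` explicitly, and together with `f(τ₀) = a f(0)` the relation `F₀(s) f(0) = 0`. For `u = g_k` the
forcing is `M` shifted to `[kτ₀ - γ, (k+1)τ₀ - γ]`; after weighting the `k`-th identity by
`e^{-kτ₀ s}`, the boundary conditions make the left-hand sides telescope from `g₀(0) = 0` to
`g_{n₀}(τ₀) = b f(0)`, while the integrals add up to `∫_{-γ}^{τ₁} M e^{-sx}`, which is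
`∫_0^{τ₁} M e^{-sx}` because `M` vanishes on the negative axis. -/

open MeasureTheory Set

noncomputable section

/-- `f` is piecewise continuous on `[a,b]`: continuous off a finite set and bounded. -/
def PwContOn (f : ℝ → ℝ) (a b : ℝ) : Prop :=
  (∃ S : Finset ℝ, ContinuousOn f (Set.Icc a b \ ↑S)) ∧
    ∃ C : ℝ, ∀ x ∈ Set.Icc a b, |f x| ≤ C

/-- `f` is piecewise continuously differentiable on `[a,b]`. -/
def PwC1On (f : ℝ → ℝ) (a b : ℝ) : Prop :=
  PwContOn f a b ∧
    ∃ S : Finset ℝ, DifferentiableOn ℝ f (Set.Icc a b \ ↑S) ∧ PwContOn (deriv f) a b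

/-- Sup norm of the partial trajectory `θ ∈ [-τ,0] ↦ φ(t+θ)`. -/
def wNorm (φ : ℝ → ℝ) (τ t : ℝ) : ℝ :=
  sSup ((fun θ => |φ (t + θ)|) '' Set.Icc (-τ) 0)

/-- `F₀(s) = 1 - a e^{-τ₀ s} - ∫₀^{τ₀} N(ν) e^{-ν s} dν`. -/
def F0 (a τ₀ : ℝ) (N : ℝ → ℝ) (s : ℂ) : ℂ :=
  1 - (a : ℂ) * Complex.exp (-(τ₀ : ℂ) * s)
    - ∫ ν in (0:ℝ)..τ₀, (N ν : ℂ) * Complex.exp (-(ν : ℂ) * s)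

/-- `F₁(s) = b e^{-τ₁ s} + ∫₀^{τ₁} M(ν) e^{-ν s} dν`. -/
def F1 (b τ₁ : ℝ) (M : ℝ → ℝ) (s : ℂ) : ℂ :=
  (b : ℂ) * Complex.exp (-(τ₁ : ℂ) * s)
    + ∫ ν in (0:ℝ)..τ₁, (M ν : ℂ) * Complex.exp (-(ν : ℂ) * s)

/-- `I₁(ν)`, for `ν ∈ [0,τ₀]`. -/
def I1 (N M f g : ℝ → ℝ) (ν : ℝ) : ℝ :=
  g ν + N ν + (∫ η in (0:ℝ)..ν, f η * M (ν - η)) - ∫ η in (0:ℝ)..ν, g η * N (ν - η)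

/-- `I₂(ν)`, for `ν ∈ (τ₀,τ₁]`. -/
def I2 (a τ₀ : ℝ) (N M f g : ℝ → ℝ) (ν : ℝ) : ℝ :=
  g ν - a * g (ν - τ₀) + (∫ η in (0:ℝ)..τ₀, f η * M (ν - η))
    - ∫ η in (ν - τ₀)..ν, g η * N (ν - η)

/-- `I₃(ν)`, for `ν ∈ [τ₁,τ₀+τ₁]`. -/
def I3 (a b τ₀ τ₁ : ℝ) (N M f g : ℝ → ℝ) (ν : ℝ) : ℝ :=
  b * f (ν - τ₁) + (∫ η in (ν - τ₁)..τ₀, f η * M (ν - η))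
    - a * g (ν - τ₀) - ∫ η in (ν - τ₀)..τ₁, g η * N (ν - η)


theorem PwContOn.integrableOn {f : ℝ → ℝ} {a b : ℝ} (hf : PwContOn f a b) :
    IntegrableOn f (Icc a b) := by
  obtain ⟨⟨S, hS⟩, C, hC⟩ := hf
  have hmeas : AEStronglyMeasurable f (volume.restrict (Icc a b)) := by
    rw [← Measure.restrict_congr_set (sdiff_null_ae_eq_self (S.finite_toSet.measure_zero volume))]
    exact hS.aestronglyMeasurable (measurableSet_Icc.diff S.finite_toSet.measurableSet)
  exact .of_bound measure_Icc_lt_top hmeas C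
    (ae_restrict_of_forall_mem measurableSet_Icc fun x hx => by simpa using hC x hx)

theorem IntervalIntegrable.const_mul_ofReal_mul_cexp {φ : ℝ → ℝ} {a b : ℝ}
    (hφ : IntervalIntegrable φ volume a b) (c s : ℂ) :
    IntervalIntegrable (fun x => c * φ x * Complex.exp (-x * s)) volume a b :=
  ((show IntervalIntegrable (fun x => (φ x : ℂ)) volume a b from
    ⟨hφ.1.ofReal, hφ.2.ofReal⟩).const_mul c).mul_continuousOn (by fun_prop)

theorem duhamel_formula {u du q : ℝ → ℂ} {s : ℂ} {T ν : ℝ}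
    (hu : ∀ x ∈ Icc 0 T, HasDerivWithinAt u (du x) (Icc 0 T) x)
    (hode : ∀ x ∈ Icc 0 T, du x + q x = s * u x)
    (hq : IntervalIntegrable (fun x => q x * Complex.exp (-x * s)) volume 0 T)
    (hν : ν ∈ Icc 0 T) :
    Complex.exp (-ν * s) * u ν - u 0 = -∫ η in (0:ℝ)..ν, q η * Complex.exp (-η * s) := by
  obtain ⟨hν0, hνT⟩ := hν
  have hderiv : ∀ x ∈ Icc 0 T, HasDerivWithinAt (fun y : ℝ => Complex.exp (-y * s) * u y)
      (-(q x * Complex.exp (-x * s))) (Icc 0 T) x := by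
    intro x hx
    have hexp : HasDerivAt (fun y : ℝ => Complex.exp (-y * s)) (-s * Complex.exp (-x * s)) x := by
      simpa [mul_comm] using ((hasDerivAt_id x).ofReal_comp.neg.mul_const s).cexp
    refine (hexp.hasDerivWithinAt.mul (hu x hx)).congr_deriv ?_
    linear_combination Complex.exp (-x * s) * hode x hx
  have hIcc : Icc 0 ν ⊆ Icc 0 T := Icc_subset_Icc le_rfl hνT
  have hftc := intervalIntegral.integral_eq_sub_of_hasDeriv_right_of_le hν0
    (fun x hx => (hderiv x (hIcc hx)).continuousWithinAt.mono hIcc)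
    (fun x hx => ((hderiv x (hIcc (Ioo_subset_Icc_self hx))).hasDerivAt
      (Icc_mem_nhds hx.1 (hx.2.trans_le hνT))).hasDerivWithinAt)
    (hq.mono_set (by simpa [uIcc_of_le hν0, uIcc_of_le (hν0.trans hνT)] using hIcc)).neg
  rw [intervalIntegral.integral_neg, neg_eq_iff_eq_neg] at hftc
  rw [hftc]
  simp

theorem integral_comp_add_right_mul_cexp (φ : ℝ → ℂ) (s : ℂ) (a b c : ℝ) :
    ∫ x in a..b, φ (x + c) * Complex.exp (-x * s)
      = Complex.exp (c * s) * ∫ x in a + c..b + c, φ x * Complex.exp (-x * s) := by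
  rw [← intervalIntegral.integral_const_mul,
    ← intervalIntegral.integral_comp_add_right
      (fun x => Complex.exp (c * s) * (φ x * Complex.exp (-x * s))) c]
  refine intervalIntegral.integral_congr fun x _ => ?_
  rw [mul_left_comm, ← Complex.exp_add]
  push_cast
  ring_nf

theorem sum_range_succ_sub_of_chain {G : Type*} [AddCommGroup G] (x y : ℕ → G) (n : ℕ)
    (hchain : ∀ k < n, y k = x (k + 1)) (hx0 : x 0 = 0) :
    ∑ k ∈ Finset.range (n + 1), (y k - x k) = y n := by
  induction n with
  | zero => simp [hx0]
  | succ n ih =>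
    rw [Finset.sum_range_succ, ih fun k hk => hchain k (by omega), hchain n (by omega)]
    abel

theorem integral_eq_integral_from_zero_of_eq_zero_of_neg {F : ℝ → ℂ} {a b : ℝ} (ha : a ≤ 0)
    (hF : ∀ x < 0, F x = 0) (hFa : IntervalIntegrable F volume a 0)
    (hFb : IntervalIntegrable F volume 0 b) :
    ∫ x in a..b, F x = ∫ x in 0..b, F x := by
  have hneg : ∫ x in a..0, F x = 0 := by
    refine (intervalIntegral.integral_congr_uIoo fun x hx => hF x ?_).trans
      intervalIntegral.integral_zero
    simpa [uIoo, max_eq_right ha] using hx.2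
  rw [← intervalIntegral.integral_add_adjacent_intervals hFa hFb, hneg, zero_add]

theorem duhamel_formula_of_shifted_forcing {u du : ℝ → ℂ} {φ : ℝ → ℝ} {s c : ℂ} {T α : ℝ}
    (hT : 0 ≤ T) (hu : ∀ x ∈ Icc 0 T, HasDerivWithinAt u (du x) (Icc 0 T) x)
    (hode : ∀ x ∈ Icc 0 T, du x + c * φ (x + α) = s * u x)
    (hφ : IntervalIntegrable φ volume α (T + α)) :
    Complex.exp (-T * s) * u T - u 0
      = -c * Complex.exp (α * s) * ∫ x in α..T + α, φ x * Complex.exp (-x * s) := by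
  have hq : IntervalIntegrable (fun x => c * φ (x + α) * Complex.exp (-x * s)) volume 0 T := by
    simpa using (hφ.comp_add_right α).const_mul_ofReal_mul_cexp c s
  rw [duhamel_formula hu hode hq ⟨hT, le_rfl⟩,
    integral_comp_add_right_mul_cexp (fun x => c * φ x) s 0 T α]
  simp only [mul_assoc, intervalIntegral.integral_const_mul, zero_add]
  ring

theorem F1_mul_eq_zero_of_chain {τ₀ γ b : ℝ} {n₀ : ℕ} {M : ℝ → ℝ} {s c : ℂ}
    (hτ₀ : 0 ≤ τ₀) (hγ : 0 ≤ γ) (hM : Integrable M) (hM0 : ∀ x < 0, M x = 0)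
    {g dg : ℕ → ℝ → ℂ}
    (hg : ∀ k ≤ n₀, ∀ x ∈ Icc 0 τ₀, HasDerivWithinAt (g k) (dg k x) (Icc 0 τ₀) x)
    (hode : ∀ k ≤ n₀, ∀ x ∈ Icc 0 τ₀, dg k x + c * (M (x + (k : ℝ) * τ₀ - γ) : ℂ) = s * g k x)
    (hlast : g n₀ τ₀ = b * c) (hchain : ∀ k < n₀, g k τ₀ = g (k + 1) 0) (hfirst : g 0 0 = 0) :
    F1 b ((n₀ + 1 : ℝ) * τ₀ - γ) M s * c = 0 := by
  set G : ℝ → ℂ := fun x => M x * Complex.exp (-x * s)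
  set α : ℕ → ℝ := fun k => k * τ₀ - γ
  set E : ℕ → ℂ := fun k => Complex.exp (-((k * τ₀ : ℝ) : ℂ) * s)
  have hGint : ∀ p q, IntervalIntegrable G volume p q := fun p q => by
    simpa [G] using hM.intervalIntegrable.const_mul_ofReal_mul_cexp 1 s
  have hstep : ∀ k ≤ n₀, E (k + 1) * g k τ₀ - E k * g k 0
      = -c * Complex.exp (-γ * s) * ∫ x in α k..α (k + 1), G x := by
    intro k hk
    have hblock := duhamel_formula_of_shifted_forcing hτ₀ (hg k hk)
      (fun x hx => by rw [← add_sub_assoc]; exact hode k hk x hx) hM.intervalIntegrable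
    have hE : E (k + 1) = E k * Complex.exp (-τ₀ * s) := by
      simp only [E, ← Complex.exp_add]; push_cast; ring_nf
    have hEα : E k * Complex.exp (α k * s) = Complex.exp (-γ * s) := by
      simp only [E, α, ← Complex.exp_add]; push_cast; ring_nf
    rw [show α (k + 1) = τ₀ + α k by simp only [α]; push_cast; ring, hE]
    linear_combination E k * hblock - c * (∫ x in α k..τ₀ + α k, G x) * hEα
  have htel := sum_range_succ_sub_of_chain (fun k => E k * g k 0) (fun k => E (k + 1) * g k τ₀) n₀
    (fun k hk => by rw [hchain k hk]) (by simp [hfirst])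
  rw [Finset.sum_congr rfl fun k hk => hstep k (Finset.mem_range_succ_iff.1 hk), ← Finset.mul_sum,
    intervalIntegral.sum_integral_adjacent_intervals fun k _ => hGint _ _,
    integral_eq_integral_from_zero_of_eq_zero_of_neg (by simpa [α] using hγ)
      (fun x hx => by simp [G, hM0 x hx]) (hGint _ _) (hGint _ _), hlast] at htel
  have hα : α n₀.succ = (n₀ + 1 : ℝ) * τ₀ - γ := by simp [α]
  have hEγ : E (n₀ + 1)
      = Complex.exp (-γ * s) * Complex.exp (-(((n₀ + 1 : ℝ) * τ₀ - γ : ℝ) : ℂ) * s) := by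
    simp only [E, ← Complex.exp_add]; push_cast; ring_nf
  have hfinal : Complex.exp (-γ * s) * (F1 b ((n₀ + 1 : ℝ) * τ₀ - γ) M s * c) = 0 := by
    rw [F1]
    rw [hα] at htel
    linear_combination -htel - b * c * hEγ
  exact (mul_eq_zero.1 hfinal).resolve_left (Complex.exp_ne_zero _)

theorem stmt13_general
    (τ₀ τ₁ γ a b : ℝ) (n₀ : ℕ) (N M : ℝ → ℝ) (s : ℂ)
    (hτ₀ : 0 < τ₀)
    (hτ₁ : τ₁ = (n₀ + 1 : ℝ) * τ₀ - γ) (hγ : 0 ≤ γ ∧ γ < τ₀)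
    (hN : PwC1On N 0 τ₀) (hM : PwC1On M 0 τ₁)
    (hM0 : ∀ x, x ∉ Set.Icc 0 τ₁ → M x = 0)
    (g : ℕ → ℝ → ℂ) (f : ℝ → ℂ) (dg : ℕ → ℝ → ℂ) (df : ℝ → ℂ)
    (hgderiv : ∀ k ≤ n₀, ∀ x ∈ Set.Icc 0 τ₀,
      HasDerivWithinAt (g k) (dg k x) (Set.Icc 0 τ₀) x)
    (hfderiv : ∀ x ∈ Set.Icc 0 τ₀, HasDerivWithinAt f (df x) (Set.Icc 0 τ₀) x)
    (hbc1 : f τ₀ = (a : ℂ) * f 0)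
    (hbc2 : g n₀ τ₀ = (b : ℂ) * f 0)
    (hbc3 : ∀ k < n₀, g k τ₀ = g (k + 1) 0)
    (heigg : ∀ k ≤ n₀, ∀ ν ∈ Set.Icc 0 τ₀,
      dg k ν + f 0 * (M (ν + (k : ℝ) * τ₀ - γ) : ℂ) = s * g k ν)
    (heigf : ∀ ν ∈ Set.Icc 0 τ₀, df ν + f 0 * (N ν : ℂ) = s * f ν)
    (hB : g 0 0 = 0) :
    (∀ ν ∈ Set.Icc 0 τ₀,
      f ν = (Complex.exp (s * ν)
        - ∫ η in (0:ℝ)..ν, (N η : ℂ) * Complex.exp (s * ((ν : ℂ) - (η : ℂ)))) * f 0) ∧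
    F0 a τ₀ N s * f 0 = 0 ∧ F1 b τ₁ M s * f 0 = 0 := by
  have hNint : IntervalIntegrable N volume 0 τ₀ :=
    (intervalIntegrable_iff_integrableOn_Icc_of_le hτ₀.le).2 hN.1.integrableOn
  have hf : ∀ ν ∈ Icc 0 τ₀, Complex.exp (-ν * s) * f ν - f 0
      = -f 0 * ∫ η in (0:ℝ)..ν, N η * Complex.exp (-η * s) := fun ν hν => by
    rw [duhamel_formula hfderiv heigf (hNint.const_mul_ofReal_mul_cexp (f 0) s) hν]
    simp only [mul_assoc, intervalIntegral.integral_const_mul, neg_mul]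
  refine ⟨fun ν hν => ?_, ?_, ?_⟩
  · have hshift : ∫ η in (0:ℝ)..ν, (N η : ℂ) * Complex.exp (s * ((ν : ℂ) - (η : ℂ)))
        = Complex.exp (s * ν) * ∫ η in (0:ℝ)..ν, N η * Complex.exp (-η * s) := by
      rw [← intervalIntegral.integral_const_mul]
      refine intervalIntegral.integral_congr fun η _ => ?_
      rw [show s * ((ν : ℂ) - η) = s * ν + -η * s by ring, Complex.exp_add]
      ring
    have hinv : Complex.exp (s * ν) * Complex.exp (-ν * s) = 1 := by
      rw [← Complex.exp_add, mul_comm s, neg_mul, add_neg_cancel, Complex.exp_zero]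
    rw [hshift]
    linear_combination Complex.exp (s * ν) * hf ν hν - f ν * hinv
  · have hτ₀' := hf τ₀ ⟨hτ₀.le, le_rfl⟩
    rw [hbc1] at hτ₀'
    rw [F0]
    linear_combination -hτ₀'
  · have hMint : Integrable M := hM.1.integrableOn.integrable_of_forall_notMem_eq_zero hM0
    rw [hτ₁] at hM0 ⊢
    exact F1_mul_eq_zero_of_chain hτ₀.le hγ.1 hMint (fun x hx => hM0 x fun h => hx.not_ge h.1)
      hgderiv heigg hbc2 hbc3 hB

/-- **Eigenfunction computation.** If `h = (g₀,…,g_{n₀},f) ∈ D(A_T)` satisfies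
`A_T h = s h` and `B_T h = 0` (i.e. `g₀(0) = 0`), then
`f(ν) = (e^{sν} - ∫₀^ν N(η)e^{s(ν-η)}dη) f(0)`, and `F₀(s)f(0) = 0` and `F₁(s)f(0) = 0`. -/
theorem stmt13
    (τ₀ τ₁ γ a b : ℝ) (n₀ : ℕ) (N M : ℝ → ℝ) (s : ℂ)
    (hτ₀ : 0 < τ₀) (hττ : τ₀ ≤ τ₁)
    (hτ₁ : τ₁ = (n₀ + 1 : ℝ) * τ₀ - γ) (hγ : 0 ≤ γ ∧ γ < τ₀)
    (hN : PwC1On N 0 τ₀) (hM : PwC1On M 0 τ₁)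
    (hN0 : ∀ x, x ∉ Set.Icc 0 τ₀ → N x = 0)
    (hM0 : ∀ x, x ∉ Set.Icc 0 τ₁ → M x = 0)
    (g : ℕ → ℝ → ℂ) (f : ℝ → ℂ) (dg : ℕ → ℝ → ℂ) (df : ℝ → ℂ)
    (hgderiv : ∀ k ≤ n₀, ∀ x ∈ Set.Icc 0 τ₀,
      HasDerivWithinAt (g k) (dg k x) (Set.Icc 0 τ₀) x)
    (hfderiv : ∀ x ∈ Set.Icc 0 τ₀, HasDerivWithinAt f (df x) (Set.Icc 0 τ₀) x)
    (hbc1 : f τ₀ = (a : ℂ) * f 0)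
    (hbc2 : g n₀ τ₀ = (b : ℂ) * f 0)
    (hbc3 : ∀ k < n₀, g k τ₀ = g (k + 1) 0)
    (heigg : ∀ k ≤ n₀, ∀ ν ∈ Set.Icc 0 τ₀,
      dg k ν + f 0 * (M (ν + (k : ℝ) * τ₀ - γ) : ℂ) = s * g k ν)
    (heigf : ∀ ν ∈ Set.Icc 0 τ₀, df ν + f 0 * (N ν : ℂ) = s * f ν)
    (hB : g 0 0 = 0) :
    (∀ ν ∈ Set.Icc 0 τ₀,
      f ν = (Complex.exp (s * ν)
        - ∫ η in (0:ℝ)..ν, (N η : ℂ) * Complex.exp (s * ((ν : ℂ) - (η : ℂ)))) * f 0) ∧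
    F0 a τ₀ N s * f 0 = 0 ∧ F1 b τ₁ M s * f 0 = 0 :=
  stmt13_general τ₀ τ₁ γ a b n₀ N M s hτ₀ hτ₁ hγ hN hM hM0 g f dg df hgderiv hfderiv hbc1 hbc2 hbc3
    heigg heigf hB
end
end

section
/- Let 0 < τ₀ ≤ τ₁ with τ₁ = (n₀+1)τ₀ − γ, n₀ ∈ ℕ, γ ∈ [0,τ₀), a, b ∈ ℝ, let N : [0,τ₀] → ℝ and M : [0,τ₁] → ℝ be piecewise continuously differentiable (extended by 0 outside their domains), and assume spectral controllability: for every s ∈ ℂ, (F₀(s), F₁(s)) ≠ (0,0), where F₀(s) = 1 − a·exp(−τ₀s) − ∫₀^{τ₀} N(ν)exp(−νs)dν and F₁(s) = b·exp(−τ₁s) + ∫₀^{τ₁} M(ν)exp(−νs)dν. Then for every s ∈ ℂ, ker(s·Id − A_T) ∩ ker(B_T) = {0}, i.e., the only h ∈ D(A_T) (ℂ-valued) with A_T h = s·h and B_T h = 0 is h = 0. -/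
open MeasureTheory Set

noncomputable section

/-! If `f 0 = 0`, every equation is homogeneous, `ν ↦ e^{-νs} h ν` is constant, and the
components vanish one after another from `g 0 0 = 0`, `g (k + 1) 0 = g k τ₀` and `f 0 = 0`.
If `f 0 ≠ 0`, variation of constants on each equation together with the boundary conditions
gives `f 0 * F₀(s) = 0` from the `f`-equation, and `f 0 * F₁(s) = 0` from the chain of
`g`-equations: after the shift `ν ↦ ν + kτ₀ - γ` their integrals cover the consecutive windows
`[kτ₀ - γ, (k + 1)τ₀ - γ]`, which telescope to `[-γ, τ₁]`, and `M = 0` on `[-γ, 0)`.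
This contradicts spectral controllability. -/

theorem PwContOn.integrableOn_Icc {w : ℝ → ℝ} {a b : ℝ} (hw : PwContOn w a b) :
    IntegrableOn w (Icc a b) := by
  obtain ⟨⟨S, hS⟩, C, hC⟩ := hw
  have hS_ae : (Icc a b \ S : Set ℝ) =ᵐ[volume] Icc a b :=
    sdiff_null_ae_eq_self (S.finite_toSet.measure_zero volume)
  have hmeas : AEStronglyMeasurable w (volume.restrict (Icc a b)) := by
    rw [← Measure.restrict_congr_set hS_ae]
    exact hS.aestronglyMeasurable (measurableSet_Icc.diff S.finite_toSet.measurableSet)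
  refine Integrable.of_bound hmeas C ?_
  exact (ae_restrict_iff' measurableSet_Icc).2 (Filter.Eventually.of_forall hC)

theorem hasDerivAt_cexp_neg_ofReal_mul (s : ℂ) (x : ℝ) :
    HasDerivAt (fun t : ℝ => Complex.exp (-t * s)) (-s * Complex.exp (-x * s)) x := by
  have h : HasDerivAt (fun t : ℝ => -(t : ℂ) * s) (-s) x := by
    simpa using (Complex.ofRealCLM.hasDerivAt (x := x)).neg.mul_const s
  simpa [mul_comm] using h.cexp

theorem cexp_neg_mul_sub_eq_neg_integral {T : ℝ} (hT : 0 ≤ T) {s : ℂ} {h dh w : ℝ → ℂ}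
    (hd : ∀ x ∈ Icc 0 T, HasDerivWithinAt h (dh x) (Icc 0 T) x)
    (hrel : ∀ x ∈ Icc 0 T, dh x + w x = s * h x) (hw : IntervalIntegrable w volume 0 T) :
    Complex.exp (-T * s) * h T - h 0 = -∫ ν in (0 : ℝ)..T, w ν * Complex.exp (-ν * s) := by
  set G : ℝ → ℂ := fun ν => Complex.exp (-ν * s) * h ν
  have hG : ∀ x ∈ Icc 0 T, HasDerivWithinAt G (-(w x * Complex.exp (-x * s))) (Icc 0 T) x := by
    intro x hx
    refine ((hasDerivAt_cexp_neg_ofReal_mul s x).hasDerivWithinAt.mul (hd x hx)).congr_deriv ?_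
    linear_combination Complex.exp (-x * s) * hrel x hx
  have hint : IntervalIntegrable (fun ν => -(w ν * Complex.exp (-ν * s))) volume 0 T :=
    (hw.mul_continuousOn (by fun_prop)).neg
  have hFTC := intervalIntegral.integral_eq_sub_of_hasDeriv_right_of_le hT
    (fun x hx => (hG x hx).continuousWithinAt)
    (fun x hx => (hG x (Ioo_subset_Icc_self hx)).mono_of_mem_nhdsWithin
      (Icc_mem_nhdsGT_of_mem ⟨hx.1.le, hx.2⟩)) hint
  rw [intervalIntegral.integral_neg] at hFTC
  simpa [G] using hFTC.symm

theorem eqOn_zero_of_hasDerivWithinAt_eq_mul {T : ℝ} {s : ℂ} {h dh : ℝ → ℂ}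
    (hd : ∀ x ∈ Icc 0 T, HasDerivWithinAt h (dh x) (Icc 0 T) x)
    (hrel : ∀ x ∈ Icc 0 T, dh x = s * h x) (h0 : h 0 = 0) :
    ∀ x ∈ Icc 0 T, h x = 0 := by
  intro x hx
  have hsub : Icc 0 x ⊆ Icc 0 T := Icc_subset_Icc_right hx.2
  have key := cexp_neg_mul_sub_eq_neg_integral (w := 0) hx.1
    (fun y hy => (hd y (hsub hy)).mono hsub) (fun y hy => by simpa using hrel y (hsub hy))
    intervalIntegrable_const
  simpa [h0, Complex.exp_ne_zero] using key

theorem integral_comp_add_right_mul_cexp_s14 (w : ℝ → ℂ) (s : ℂ) (T d : ℝ) :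
    Complex.exp (-d * s) * ∫ ν in (0 : ℝ)..T, w (ν + d) * Complex.exp (-ν * s) =
      ∫ ν in d..T + d, w ν * Complex.exp (-ν * s) := by
  have h := intervalIntegral.integral_comp_add_right
    (fun ν => w ν * Complex.exp (-ν * s)) d (a := 0) (b := T)
  rw [zero_add] at h
  rw [← h, ← intervalIntegral.integral_const_mul]
  refine intervalIntegral.integral_congr fun ν _ => ?_
  simp only [mul_left_comm _ (w _), ← Complex.exp_add]
  push_cast
  ring_nf

theorem cexp_mul_apply_eq_sub_integral {T d : ℝ} (hT : 0 ≤ T) {s : ℂ} {h dh w : ℝ → ℂ}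
    (hw : Integrable w) (hd : ∀ x ∈ Icc 0 T, HasDerivWithinAt h (dh x) (Icc 0 T) x)
    (hrel : ∀ x ∈ Icc 0 T, dh x + w (x + d) = s * h x) :
    Complex.exp (-(T + d : ℝ) * s) * h T =
      Complex.exp (-d * s) * h 0 - ∫ ν in d..T + d, w ν * Complex.exp (-ν * s) := by
  have key := cexp_neg_mul_sub_eq_neg_integral hT hd hrel (hw.comp_add_right d).intervalIntegrable
  have hexp : Complex.exp (-(T + d : ℝ) * s) = Complex.exp (-d * s) * Complex.exp (-T * s) := by
    rw [← Complex.exp_add]; push_cast; ring_nf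
  rw [← integral_comp_add_right_mul_cexp_s14, hexp]
  linear_combination Complex.exp (-d * s) * key

theorem eqOn_zero_of_chain {τ₀ : ℝ} (hτ₀ : 0 ≤ τ₀) {n₀ : ℕ} {s : ℂ} {g dg : ℕ → ℝ → ℂ}
    (hd : ∀ k ≤ n₀, ∀ x ∈ Icc 0 τ₀, HasDerivWithinAt (g k) (dg k x) (Icc 0 τ₀) x)
    (hbc : ∀ k < n₀, g k τ₀ = g (k + 1) 0)
    (hrel : ∀ k ≤ n₀, ∀ x ∈ Icc 0 τ₀, dg k x = s * g k x) (h0 : g 0 0 = 0) :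
    ∀ k ≤ n₀, ∀ x ∈ Icc 0 τ₀, g k x = 0 := by
  intro k
  induction k with
  | zero => exact fun hk => eqOn_zero_of_hasDerivWithinAt_eq_mul (hd 0 hk) (hrel 0 hk) h0
  | succ k ih =>
    intro hk
    have hk' : k < n₀ := hk
    refine eqOn_zero_of_hasDerivWithinAt_eq_mul (hd _ hk) (hrel _ hk) ?_
    rw [← hbc k hk']
    exact ih hk'.le τ₀ ⟨hτ₀, le_rfl⟩

theorem cexp_mul_apply_right_eq_neg_integral {τ₀ γ : ℝ} (hτ₀ : 0 ≤ τ₀) {n₀ : ℕ} {s : ℂ}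
    {w : ℝ → ℂ} (hw : Integrable w) {g dg : ℕ → ℝ → ℂ}
    (hd : ∀ k ≤ n₀, ∀ x ∈ Icc 0 τ₀, HasDerivWithinAt (g k) (dg k x) (Icc 0 τ₀) x)
    (hbc : ∀ k < n₀, g k τ₀ = g (k + 1) 0)
    (hrel : ∀ k ≤ n₀, ∀ x ∈ Icc 0 τ₀, dg k x + w (x + k * τ₀ - γ) = s * g k x)
    (h0 : g 0 0 = 0) :
    ∀ k ≤ n₀, Complex.exp (-(((k : ℝ) + 1) * τ₀ - γ : ℝ) * s) * g k τ₀ =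
      -∫ ν in -γ..((k : ℝ) + 1) * τ₀ - γ, w ν * Complex.exp (-ν * s) := by
  have hstep : ∀ k ≤ n₀, Complex.exp (-(((k : ℝ) + 1) * τ₀ - γ : ℝ) * s) * g k τ₀ =
      Complex.exp (-((k : ℝ) * τ₀ - γ : ℝ) * s) * g k 0 -
        ∫ ν in (k : ℝ) * τ₀ - γ..((k : ℝ) + 1) * τ₀ - γ, w ν * Complex.exp (-ν * s) := by
    intro k hk
    have h := cexp_mul_apply_eq_sub_integral (d := k * τ₀ - γ) hτ₀ hw (hd k hk)
      (fun x hx => by rw [← add_sub_assoc]; exact hrel k hk x hx)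
    rwa [show τ₀ + ((k : ℝ) * τ₀ - γ) = ((k : ℝ) + 1) * τ₀ - γ by ring] at h
  have hint : ∀ u v : ℝ, IntervalIntegrable (fun ν => w ν * Complex.exp (-ν * s)) volume u v :=
    fun u v => hw.intervalIntegrable.mul_continuousOn (by fun_prop)
  intro k
  induction k with
  | zero => intro hk; simpa [h0] using hstep 0 hk
  | succ k ih =>
    intro hk
    have hk' : k < n₀ := hk
    rw [hstep _ hk, ← hbc k hk', Nat.cast_succ, ih hk'.le,
      ← intervalIntegral.integral_add_adjacent_intervals (hint (-γ) (((k : ℝ) + 1) * τ₀ - γ))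
        (hint _ (((k : ℝ) + 1 + 1) * τ₀ - γ))]
    ring

theorem mul_F0_eq_zero {a τ₀ : ℝ} (hτ₀ : 0 ≤ τ₀) {N : ℝ → ℝ} (hN : PwContOn N 0 τ₀) {s : ℂ}
    {f df : ℝ → ℂ} (hd : ∀ x ∈ Icc 0 τ₀, HasDerivWithinAt f (df x) (Icc 0 τ₀) x)
    (hbc : f τ₀ = a * f 0) (hrel : ∀ x ∈ Icc 0 τ₀, df x + f 0 * N x = s * f x) :
    f 0 * F0 a τ₀ N s = 0 := by
  have hint : IntervalIntegrable (fun x => f 0 * (N x : ℂ)) volume 0 τ₀ :=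
    (intervalIntegrable_iff_integrableOn_Icc_of_le hτ₀).2
      (hN.integrableOn_Icc.ofReal.const_mul (f 0))
  have key := cexp_neg_mul_sub_eq_neg_integral hτ₀ hd hrel hint
  simp only [mul_assoc, intervalIntegral.integral_const_mul] at key
  rw [hbc] at key
  rw [F0]
  linear_combination -key

theorem mul_F1_eq_zero {b τ₀ τ₁ γ : ℝ} {n₀ : ℕ} (hτ₀ : 0 ≤ τ₀)
    (hτ₁ : τ₁ = (n₀ + 1 : ℝ) * τ₀ - γ) (hγ : 0 ≤ γ) {M : ℝ → ℝ} (hM : PwContOn M 0 τ₁)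
    (hM0 : ∀ x, x ∉ Icc 0 τ₁ → M x = 0) {s c : ℂ} {g dg : ℕ → ℝ → ℂ}
    (hd : ∀ k ≤ n₀, ∀ x ∈ Icc 0 τ₀, HasDerivWithinAt (g k) (dg k x) (Icc 0 τ₀) x)
    (hbc : ∀ k < n₀, g k τ₀ = g (k + 1) 0) (hbc_end : g n₀ τ₀ = b * c)
    (hrel : ∀ k ≤ n₀, ∀ x ∈ Icc 0 τ₀, dg k x + c * M (x + k * τ₀ - γ) = s * g k x)
    (h0 : g 0 0 = 0) :
    c * F1 b τ₁ M s = 0 := by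
  have hMint : Integrable M := hM.integrableOn_Icc.integrable_of_forall_notMem_eq_zero hM0
  have hint : ∀ u v : ℝ,
      IntervalIntegrable (fun ν => (M ν : ℂ) * Complex.exp (-ν * s)) volume u v :=
    fun u v => hMint.ofReal.intervalIntegrable.mul_continuousOn (by fun_prop)
  have key := cexp_mul_apply_right_eq_neg_integral (w := fun x => c * (M x : ℂ)) hτ₀
    (hMint.ofReal.const_mul c) hd hbc hrel h0 n₀ le_rfl
  have hvanish : ∫ ν in -γ..0, (M ν : ℂ) * Complex.exp (-ν * s) = 0 := by
    rw [intervalIntegral.integral_of_le (by linarith), integral_Ioc_eq_integral_Ioo]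
    refine setIntegral_eq_zero_of_forall_eq_zero fun x hx => ?_
    simp [hM0 x fun hx' => hx.2.not_ge hx'.1]
  simp only [mul_assoc, intervalIntegral.integral_const_mul] at key
  rw [← hτ₁, hbc_end, ← intervalIntegral.integral_add_adjacent_intervals (hint _ 0) (hint 0 _),
    hvanish, zero_add] at key
  rw [F1]
  linear_combination key

theorem stmt14_general
    (τ₀ τ₁ γ a b : ℝ) (n₀ : ℕ) (N M : ℝ → ℝ) (s : ℂ)
    (hτ₀ : 0 < τ₀)
    (hτ₁ : τ₁ = (n₀ + 1 : ℝ) * τ₀ - γ) (hγ : 0 ≤ γ ∧ γ < τ₀)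
    (hN : PwC1On N 0 τ₀) (hM : PwC1On M 0 τ₁)
    (hM0 : ∀ x, x ∉ Set.Icc 0 τ₁ → M x = 0)
    (hspec : ∀ z : ℂ, ¬(F0 a τ₀ N z = 0 ∧ F1 b τ₁ M z = 0))
    (g : ℕ → ℝ → ℂ) (f : ℝ → ℂ) (dg : ℕ → ℝ → ℂ) (df : ℝ → ℂ)
    (hgderiv : ∀ k ≤ n₀, ∀ x ∈ Set.Icc 0 τ₀,
      HasDerivWithinAt (g k) (dg k x) (Set.Icc 0 τ₀) x)
    (hfderiv : ∀ x ∈ Set.Icc 0 τ₀, HasDerivWithinAt f (df x) (Set.Icc 0 τ₀) x)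
    (hbc1 : f τ₀ = (a : ℂ) * f 0)
    (hbc2 : g n₀ τ₀ = (b : ℂ) * f 0)
    (hbc3 : ∀ k < n₀, g k τ₀ = g (k + 1) 0)
    (heigg : ∀ k ≤ n₀, ∀ ν ∈ Set.Icc 0 τ₀,
      dg k ν + f 0 * (M (ν + (k : ℝ) * τ₀ - γ) : ℂ) = s * g k ν)
    (heigf : ∀ ν ∈ Set.Icc 0 τ₀, df ν + f 0 * (N ν : ℂ) = s * f ν)
    (hB : g 0 0 = 0) :
    (∀ k ≤ n₀, ∀ ν ∈ Set.Icc 0 τ₀, g k ν = 0) ∧ (∀ ν ∈ Set.Icc 0 τ₀, f ν = 0) := by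
  by_cases hc : f 0 = 0
  · simp only [hc, zero_mul, add_zero] at heigg heigf
    exact ⟨eqOn_zero_of_chain hτ₀.le hgderiv hbc3 heigg hB,
      eqOn_zero_of_hasDerivWithinAt_eq_mul hfderiv heigf hc⟩
  · refine absurd ⟨?_, ?_⟩ (hspec s)
    · exact (mul_eq_zero.mp (mul_F0_eq_zero hτ₀.le hN.1 hfderiv hbc1 heigf)).resolve_left hc
    · exact (mul_eq_zero.mp (mul_F1_eq_zero hτ₀.le hτ₁ hγ.1 hM.1 hM0 hgderiv hbc3 hbc2 heigg
        hB)).resolve_left hc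

/-- **Condition 4 of the invertibility lemma.** Under spectral controllability, for every
`s ∈ ℂ` the only `h = (g₀,…,g_{n₀},f) ∈ D(A_T)` with `A_T h = s h` and `B_T h = 0` is
`h = 0`, i.e. `ker(s·Id - A_T) ∩ ker B_T = {0}`. -/
theorem stmt14
    (τ₀ τ₁ γ a b : ℝ) (n₀ : ℕ) (N M : ℝ → ℝ) (s : ℂ)
    (hτ₀ : 0 < τ₀) (hττ : τ₀ ≤ τ₁)
    (hτ₁ : τ₁ = (n₀ + 1 : ℝ) * τ₀ - γ) (hγ : 0 ≤ γ ∧ γ < τ₀)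
    (hN : PwC1On N 0 τ₀) (hM : PwC1On M 0 τ₁)
    (hN0 : ∀ x, x ∉ Set.Icc 0 τ₀ → N x = 0)
    (hM0 : ∀ x, x ∉ Set.Icc 0 τ₁ → M x = 0)
    (hspec : ∀ z : ℂ, ¬(F0 a τ₀ N z = 0 ∧ F1 b τ₁ M z = 0))
    (g : ℕ → ℝ → ℂ) (f : ℝ → ℂ) (dg : ℕ → ℝ → ℂ) (df : ℝ → ℂ)
    (hgderiv : ∀ k ≤ n₀, ∀ x ∈ Set.Icc 0 τ₀,
      HasDerivWithinAt (g k) (dg k x) (Set.Icc 0 τ₀) x)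
    (hfderiv : ∀ x ∈ Set.Icc 0 τ₀, HasDerivWithinAt f (df x) (Set.Icc 0 τ₀) x)
    (hbc1 : f τ₀ = (a : ℂ) * f 0)
    (hbc2 : g n₀ τ₀ = (b : ℂ) * f 0)
    (hbc3 : ∀ k < n₀, g k τ₀ = g (k + 1) 0)
    (heigg : ∀ k ≤ n₀, ∀ ν ∈ Set.Icc 0 τ₀,
      dg k ν + f 0 * (M (ν + (k : ℝ) * τ₀ - γ) : ℂ) = s * g k ν)
    (heigf : ∀ ν ∈ Set.Icc 0 τ₀, df ν + f 0 * (N ν : ℂ) = s * f ν)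
    (hB : g 0 0 = 0) :
    (∀ k ≤ n₀, ∀ ν ∈ Set.Icc 0 τ₀, g k ν = 0) ∧ (∀ ν ∈ Set.Icc 0 τ₀, f ν = 0) :=
  stmt14_general τ₀ τ₁ γ a b n₀ N M s hτ₀ hτ₁ hγ hN hM hM0 hspec g f dg df hgderiv hfderiv hbc1 hbc2
    hbc3 heigg heigf hB
end
end
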